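/- arXiv:2601.02797 — 5 statements merged into one kernel-verified Lean document; each statement's English description precedes it below -/
import Mathlib

section
/- (Proposition 3.2(i)) Suppose K is nonempty. If f_max equals the optimal value f_γ = inf{γ_1+⋯+γ_m : γ_i ∈ ℝ, γ_i ≥ a_i log p_i(x) for all x ∈ K and all i ∈ [m]}, and this infimum is attained, then the convex relaxation is tight, i.e., f_mom = f_max. -/
open MvPolynomial Finset Filter Topology

noncomputable section

/-- Extended-real logarithm with the convention `log t = -∞` for `t ≤ 0`. -/
def elog (t : ℝ) : EReal := if 0 < t then ((Real.log t : ℝ) : EReal) else ⊥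

/-- The degree `|α|` of a multi-index `α`. -/
def mdeg {n : ℕ} (α : Fin n →₀ ℕ) : ℕ := ∑ i, α i

/-- The monomial vector `[x]_{2d}`, modeled as the function on multi-indices
whose `α`-entry is `x^α` for `|α| ≤ 2d` (and `0` above the truncation degree). -/
def monoVec {n : ℕ} (d : ℕ) (x : Fin n → ℝ) : (Fin n →₀ ℕ) → ℝ :=
  fun α => if mdeg α ≤ 2 * d then ∏ i, x i ^ α i else 0

/-- The pairing `⟨p, z⟩ = ∑_α p_α z_α`. -/
def pairing {n : ℕ} (p : MvPolynomial (Fin n) ℝ) (z : (Fin n →₀ ℕ) → ℝ) : ℝ :=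
  ∑ α ∈ p.support, p.coeff α * z α

/-- The moment cone `R_d(S)`. -/
def momentCone {n : ℕ} (d : ℕ) (S : Set (Fin n → ℝ)) : Set ((Fin n →₀ ℕ) → ℝ) :=
  {z | ∃ (l : ℕ) (lam : Fin l → ℝ) (v : Fin l → (Fin n → ℝ)),
    (∀ j, 0 ≤ lam j) ∧ (∀ j, v j ∈ S) ∧ z = ∑ j, lam j • monoVec d (v j)}

/-- `⌈t/2⌉` for a natural number `t`. -/
def ceilHalf (t : ℕ) : ℕ := (t + 1) / 2

/-- The objective `f(x) = ∑ᵢ aᵢ log pᵢ(x)` (with `log 0 = -∞`). -/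
def fObj {n m : ℕ} (a : Fin m → ℝ) (p : Fin m → MvPolynomial (Fin n) ℝ)
    (x : Fin n → ℝ) : EReal :=
  ∑ i, (a i : EReal) * elog (eval x (p i))

/-- `f_max`, the optimal value of the log-polynomial optimization problem. -/
def fMax {n m : ℕ} (a : Fin m → ℝ) (p : Fin m → MvPolynomial (Fin n) ℝ)
    (K : Set (Fin n → ℝ)) : EReal :=
  sSup (fObj a p '' K)

/-- The moment objective `∑ᵢ aᵢ log ⟨pᵢ, z⟩`. -/
def objVal {n m : ℕ} (a : Fin m → ℝ) (p : Fin m → MvPolynomial (Fin n) ℝ)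
    (z : (Fin n →₀ ℕ) → ℝ) : EReal :=
  ∑ i, (a i : EReal) * elog (pairing (p i) z)

/-- `f_mom`, the optimal value of the convex relaxation over `R_d(S) ∩ {z₀ = 1}`. -/
def fMom {n m : ℕ} (d : ℕ) (a : Fin m → ℝ) (p : Fin m → MvPolynomial (Fin n) ℝ)
    (S : Set (Fin n → ℝ)) : EReal :=
  sSup (objVal a p '' {z ∈ momentCone d S | z 0 = 1})

/-- `M_k[y] ⪰ 0`, encoded via quadratic forms whose coefficient vectors are
coefficient vectors of polynomials of degree at most `k`. -/
def momMatPSD {n : ℕ} (k : ℕ) (y : (Fin n →₀ ℕ) → ℝ) : Prop :=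
  ∀ q : MvPolynomial (Fin n) ℝ, q.totalDegree ≤ k →
    0 ≤ ∑ α ∈ q.support, ∑ β ∈ q.support, q.coeff α * q.coeff β * y (α + β)

/-- The `(α,β)` entry of the localizing matrix `L_c^{(k)}[y]`. -/
def locEntry {n : ℕ} (c : MvPolynomial (Fin n) ℝ) (y : (Fin n →₀ ℕ) → ℝ)
    (α β : Fin n →₀ ℕ) : ℝ :=
  ∑ γ ∈ c.support, c.coeff γ * y (γ + α + β)

/-- `L_c^{(k)}[y] = 0`. -/
def locMatZero {n : ℕ} (c : MvPolynomial (Fin n) ℝ) (k : ℕ)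
    (y : (Fin n →₀ ℕ) → ℝ) : Prop :=
  ∀ α β : Fin n →₀ ℕ, mdeg α ≤ k - ceilHalf c.totalDegree →
    mdeg β ≤ k - ceilHalf c.totalDegree → locEntry c y α β = 0

/-- `L_c^{(k)}[y] ⪰ 0`. -/
def locMatPSD {n : ℕ} (c : MvPolynomial (Fin n) ℝ) (k : ℕ)
    (y : (Fin n →₀ ℕ) → ℝ) : Prop :=
  ∀ q : MvPolynomial (Fin n) ℝ, q.totalDegree ≤ k - ceilHalf c.totalDegree →
    0 ≤ ∑ α ∈ q.support, ∑ β ∈ q.support, q.coeff α * q.coeff β * locEntry c y α β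

/-- Feasibility for the `k`-th order moment relaxation with equality constraint
polynomials `Eqs` and inequality constraint polynomials `Ineqs`. -/
def momFeasible {n : ℕ} (Eqs Ineqs : Set (MvPolynomial (Fin n) ℝ)) (k : ℕ)
    (y : (Fin n →₀ ℕ) → ℝ) : Prop :=
  y 0 = 1 ∧ momMatPSD k y ∧ (∀ c ∈ Eqs, locMatZero c k y) ∧ ∀ c ∈ Ineqs, locMatPSD c k y

/-- `f_mom,k`, the optimal value of the `k`-th order moment relaxation. -/
def fMomK {n m : ℕ} (a : Fin m → ℝ) (p : Fin m → MvPolynomial (Fin n) ℝ)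
    (Eqs Ineqs : Set (MvPolynomial (Fin n) ℝ)) (k : ℕ) : EReal :=
  sSup (objVal a p '' {y | momFeasible Eqs Ineqs k y})

/-- The value `f_γ` of the γ-program. -/
def fGamma {n m : ℕ} (a : Fin m → ℝ) (p : Fin m → MvPolynomial (Fin n) ℝ)
    (K : Set (Fin n → ℝ)) : EReal :=
  sInf {e : EReal | ∃ γ : Fin m → ℝ,
    (∀ i, ∀ x ∈ K, (a i : EReal) * elog (eval x (p i)) ≤ ((γ i : ℝ) : EReal)) ∧
    e = ((∑ i, γ i : ℝ) : EReal)}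

/-- A polynomial is a sum of squares. -/
def IsSOSPoly {n : ℕ} (σ : MvPolynomial (Fin n) ℝ) : Prop :=
  ∃ (t : ℕ) (r : Fin t → MvPolynomial (Fin n) ℝ), σ = ∑ j, (r j) ^ 2

/-- The set `Ideal[c_E] + QM[c_I]`. -/
def idealQM {n : ℕ} {ι : Type*} (E I : Finset ι) (c : ι → MvPolynomial (Fin n) ℝ) :
    Set (MvPolynomial (Fin n) ℝ) :=
  {q | ∃ (h : ι → MvPolynomial (Fin n) ℝ) (σ0 : MvPolynomial (Fin n) ℝ)
      (σ : ι → MvPolynomial (Fin n) ℝ),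
    IsSOSPoly σ0 ∧ (∀ j ∈ I, IsSOSPoly (σ j)) ∧
    q = (∑ j ∈ E, h j * c j) + σ0 + ∑ j ∈ I, σ j * c j}

/-!
`f_max ≤ f_mom` always holds, because every `x ∈ K` gives the feasible moment vector `[x]_{2d}`,
on which `⟨pᵢ, [x]_{2d}⟩ = pᵢ(x)`. Conversely, an optimal `γ` says `pᵢ ≤ exp (γᵢ / aᵢ)` on `K`;
this bound passes to every convex combination of point evaluations, i.e. to every `z ∈ R_d(K)`
with `z₀ = 1` (the weights sum to one), so `f_mom ≤ ∑ γᵢ = f_γ = f_max`.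
-/

lemma monoVec_zero {n : ℕ} (d : ℕ) (x : Fin n → ℝ) : monoVec d x 0 = 1 := by
  simp [monoVec, mdeg]

lemma pairing_monoVec {n d : ℕ} {p : MvPolynomial (Fin n) ℝ} (hp : p.totalDegree ≤ 2 * d)
    (x : Fin n → ℝ) : pairing p (monoVec d x) = eval x p := by
  rw [pairing, eval_eq']
  refine sum_congr rfl fun α hα => ?_
  have hα_deg : mdeg α ≤ p.totalDegree := by
    have h := le_totalDegree hα
    rwa [Finsupp.sum_fintype _ _ fun _ => rfl] at h
  rw [monoVec, if_pos (hα_deg.trans hp)]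

lemma pairing_sum_smul {n : ℕ} {κ : Type*} (p : MvPolynomial (Fin n) ℝ) (s : Finset κ)
    (lam : κ → ℝ) (w : κ → (Fin n →₀ ℕ) → ℝ) :
    pairing p (∑ j ∈ s, lam j • w j) = ∑ j ∈ s, lam j * pairing p (w j) := by
  simp only [pairing, Finset.sum_apply, Pi.smul_apply, smul_eq_mul, mul_sum]
  rw [sum_comm]
  exact sum_congr rfl fun _ _ => sum_congr rfl fun _ _ => by ring

lemma monoVec_mem_momentCone {n : ℕ} (d : ℕ) {S : Set (Fin n → ℝ)} {x : Fin n → ℝ}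
    (hx : x ∈ S) : monoVec d x ∈ momentCone d S :=
  ⟨1, fun _ => 1, fun _ => x, fun _ => zero_le_one, fun _ => hx, by simp⟩

lemma pairing_le_of_mem_momentCone {n d : ℕ} {S : Set (Fin n → ℝ)} {p : MvPolynomial (Fin n) ℝ}
    (hp : p.totalDegree ≤ 2 * d) {B : ℝ} (hB : ∀ x ∈ S, eval x p ≤ B)
    {z : (Fin n →₀ ℕ) → ℝ} (hz : z ∈ momentCone d S) (hz0 : z 0 = 1) : pairing p z ≤ B := by
  obtain ⟨l, lam, v, hlam, hv, rfl⟩ := hz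
  have hlam_sum : ∑ j, lam j = 1 := by
    simpa only [Finset.sum_apply, Pi.smul_apply, monoVec_zero, smul_eq_mul, mul_one] using hz0
  calc pairing p (∑ j, lam j • monoVec d (v j))
      = ∑ j, lam j * eval (v j) p := by simp only [pairing_sum_smul, pairing_monoVec hp]
    _ ≤ ∑ j, lam j * B := sum_le_sum fun j _ => mul_le_mul_of_nonneg_left (hB _ (hv j)) (hlam j)
    _ = B := by rw [← sum_mul, hlam_sum, one_mul]

lemma mul_elog_le_coe_iff {a : ℝ} (ha : 0 < a) (t γ : ℝ) :
    (a : EReal) * elog t ≤ (γ : EReal) ↔ t ≤ Real.exp (γ / a) := by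
  unfold elog
  split_ifs with ht
  · rw [← EReal.coe_mul, EReal.coe_le_coe_iff, ← Real.log_le_iff_le_exp ht, le_div_iff₀ ha,
      mul_comm]
  · rw [EReal.mul_bot_of_pos (by exact_mod_cast ha)]
    simpa only [bot_le, true_iff] using (not_lt.mp ht).trans (Real.exp_pos _).le

lemma EReal.coe_finset_sum {κ : Type*} (s : Finset κ) (f : κ → ℝ) :
    ((∑ j ∈ s, f j : ℝ) : EReal) = ∑ j ∈ s, (f j : EReal) :=
  map_sum (⟨⟨(↑), EReal.coe_zero⟩, EReal.coe_add⟩ : ℝ →+ EReal) f s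

lemma objVal_monoVec {n m d : ℕ} (a : Fin m → ℝ) {p : Fin m → MvPolynomial (Fin n) ℝ}
    (hp : ∀ i, (p i).totalDegree ≤ 2 * d) (x : Fin n → ℝ) :
    objVal a p (monoVec d x) = fObj a p x := by
  simp only [objVal, fObj, pairing_monoVec (hp _)]

lemma fMax_le_fMom {n m d : ℕ} (a : Fin m → ℝ) {p : Fin m → MvPolynomial (Fin n) ℝ}
    (hp : ∀ i, (p i).totalDegree ≤ 2 * d) (K : Set (Fin n → ℝ)) : fMax a p K ≤ fMom d a p K := by
  refine sSup_le ?_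
  rintro _ ⟨x, hx, rfl⟩
  exact le_sSup ⟨monoVec d x, ⟨monoVec_mem_momentCone d hx, monoVec_zero d x⟩,
    objVal_monoVec a hp x⟩

lemma fMom_le_of_gamma_feasible {n m d : ℕ} {a : Fin m → ℝ} (ha : ∀ i, 0 < a i)
    {p : Fin m → MvPolynomial (Fin n) ℝ} (hp : ∀ i, (p i).totalDegree ≤ 2 * d)
    {K : Set (Fin n → ℝ)} {γ : Fin m → ℝ}
    (hγ : ∀ i, ∀ x ∈ K, (a i : EReal) * elog (eval x (p i)) ≤ (γ i : EReal)) :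
    fMom d a p K ≤ ((∑ i, γ i : ℝ) : EReal) := by
  refine sSup_le ?_
  rintro _ ⟨z, ⟨hz, hz0⟩, rfl⟩
  rw [EReal.coe_finset_sum]
  refine sum_le_sum fun i _ => (mul_elog_le_coe_iff (ha i) _ _).mpr ?_
  exact pairing_le_of_mem_momentCone (hp i)
    (fun x hx => (mul_elog_le_coe_iff (ha i) _ _).mp (hγ i x hx)) hz hz0

lemma le_two_mul_of_ceilHalf_le {t d : ℕ} (h : ceilHalf t ≤ d) : t ≤ 2 * d := by
  unfold ceilHalf at h
  omega

theorem fMom_eq_fMax_of_gamma_program_general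
    {n m : ℕ} {ι : Type*} [DecidableEq ι]
    (E I : Finset ι)
    (c : ι → MvPolynomial (Fin n) ℝ)
    (K : Set (Fin n → ℝ))
    (a : Fin m → ℝ) (ha : ∀ i, 0 < a i)
    (p : Fin m → MvPolynomial (Fin n) ℝ)
    (d : ℕ)
    (hd : d = (Finset.univ.sup fun i => ceilHalf (p i).totalDegree) ⊔
      ((E ∪ I).sup fun j => ceilHalf (c j).totalDegree))
    (heq : fMax a p K = fGamma a p K)
    (hattain : ∃ γ : Fin m → ℝ,
      (∀ i, ∀ x ∈ K, (a i : EReal) * elog (eval x (p i)) ≤ ((γ i : ℝ) : EReal)) ∧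
      ((∑ i, γ i : ℝ) : EReal) = fGamma a p K) :
    fMom d a p K = fMax a p K := by
  have hdeg (i : Fin m) : (p i).totalDegree ≤ 2 * d :=
    le_two_mul_of_ceilHalf_le <| hd ▸ le_sup_of_le_left <|
      le_sup (f := fun i => ceilHalf (p i).totalDegree) (mem_univ i)
  obtain ⟨γ, hγ, hγ_opt⟩ := hattain
  refine le_antisymm ?_ (fMax_le_fMom a hdeg K)
  rw [heq, ← hγ_opt]
  exact fMom_le_of_gamma_feasible ha hdeg hγ

/-- **Proposition 3.2(i).**  If `K ≠ ∅`, `f_max = f_γ` and the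
infimum defining `f_γ` is attained, then the convex relaxation is tight:
`f_mom = f_max`. -/
theorem fMom_eq_fMax_of_gamma_program
    {n m : ℕ} (hm : 1 ≤ m) {ι : Type*} [DecidableEq ι]
    (E I : Finset ι) (hEI : Disjoint E I)
    (c : ι → MvPolynomial (Fin n) ℝ)
    (K : Set (Fin n → ℝ))
    (hK : K = {x | (∀ j ∈ E, eval x (c j) = 0) ∧ ∀ j ∈ I, 0 ≤ eval x (c j)})
    (hKne : K.Nonempty)
    (a : Fin m → ℝ) (ha : ∀ i, 0 < a i)
    (p : Fin m → MvPolynomial (Fin n) ℝ)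
    (hp : ∀ i, ∀ x ∈ K, 0 ≤ eval x (p i))
    (d : ℕ)
    (hd : d = (Finset.univ.sup fun i => ceilHalf (p i).totalDegree) ⊔
      ((E ∪ I).sup fun j => ceilHalf (c j).totalDegree))
    (heq : fMax a p K = fGamma a p K)
    (hattain : ∃ γ : Fin m → ℝ,
      (∀ i, ∀ x ∈ K, (a i : EReal) * elog (eval x (p i)) ≤ ((γ i : ℝ) : EReal)) ∧
      ((∑ i, γ i : ℝ) : EReal) = fGamma a p K) :
    fMom d a p K = fMax a p K :=
  fMom_eq_fMax_of_gamma_program_general E I c K a ha p d hd heq hattain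

end
end

section
/- (Corollary 4.2) Let k ≥ d and let y* be a maximizer of the k-th order moment relaxation. Suppose y*_α = (v*)^α for all α with |α| ≤ 2d, where v* = (y*_{e_1},…,y*_{e_n}) is the vector of entries of y* indexed by the unit multi-indices. Then v* ∈ K, f_max = f_mom,k, and v* is a global maximizer of (P). -/
open MvPolynomial Finset Filter Topology

noncomputable section

/-!
If `y*` agrees up to degree `2d` with the moment vector of the point `v*`, then every pairing
`⟨q, y*⟩` with `deg q ≤ 2d` is the evaluation `q(v*)`. Reading the `(0,0)` entries of the
localizing matrices of `y*` this way gives `v* ∈ K`, and the relaxed objective at `y*` becomes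
`f(v*)`. Conversely each `x ∈ K` yields the feasible point `[x]_{2k}` of the relaxation with
objective `f(x)`, so `f_max ≤ f_mom,k = f(v*) ≤ f_max`.
-/

lemma mdeg_add {n : ℕ} (α β : Fin n →₀ ℕ) : mdeg (α + β) = mdeg α + mdeg β := by
  simp [mdeg, Finset.sum_add_distrib]

lemma mdeg_le_totalDegree {n : ℕ} {q : MvPolynomial (Fin n) ℝ} {γ : Fin n →₀ ℕ}
    (h : γ ∈ q.support) : mdeg γ ≤ q.totalDegree := by
  have h := le_totalDegree h
  rwa [Finsupp.sum_fintype _ _ (fun _ => rfl)] at h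

lemma le_two_mul_ceilHalf (t : ℕ) : t ≤ 2 * ceilHalf t := by
  unfold ceilHalf; omega

lemma prod_pow_add {n : ℕ} (x : Fin n → ℝ) (α β : Fin n →₀ ℕ) :
    ∏ i, x i ^ (α + β) i = (∏ i, x i ^ α i) * ∏ i, x i ^ β i := by
  simp only [Finsupp.add_apply, pow_add, Finset.prod_mul_distrib]

lemma monoVec_of_mdeg_le {n : ℕ} {k : ℕ} (x : Fin n → ℝ) {γ : Fin n →₀ ℕ}
    (h : mdeg γ ≤ 2 * k) : monoVec k x γ = ∏ i, x i ^ γ i :=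
  if_pos h

lemma pairing_eq_eval {n : ℕ} {q : MvPolynomial (Fin n) ℝ} {x : Fin n → ℝ}
    {z : (Fin n →₀ ℕ) → ℝ} (hz : ∀ γ ∈ q.support, z γ = ∏ i, x i ^ γ i) :
    pairing q z = eval x q := by
  rw [pairing, eval_eq']
  exact Finset.sum_congr rfl fun γ hγ => by rw [hz γ hγ]

lemma objVal_eq_fObj {n m : ℕ} {a : Fin m → ℝ} {p : Fin m → MvPolynomial (Fin n) ℝ}
    {x : Fin n → ℝ} {z : (Fin n →₀ ℕ) → ℝ}
    (hz : ∀ i, ∀ γ ∈ (p i).support, z γ = ∏ j, x j ^ γ j) :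
    objVal a p z = fObj a p x := by
  simp only [objVal, fObj, pairing_eq_eval (hz _)]

lemma quadForm_eq_mul_eval_sq {n : ℕ} (q : MvPolynomial (Fin n) ℝ) (x : Fin n → ℝ) (s : ℝ)
    {w : (Fin n →₀ ℕ) → (Fin n →₀ ℕ) → ℝ}
    (hw : ∀ α ∈ q.support, ∀ β ∈ q.support,
      w α β = s * ((∏ i, x i ^ α i) * ∏ i, x i ^ β i)) :
    ∑ α ∈ q.support, ∑ β ∈ q.support, q.coeff α * q.coeff β * w α β = s * eval x q ^ 2 := by
  calc ∑ α ∈ q.support, ∑ β ∈ q.support, q.coeff α * q.coeff β * w α β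
      = s * ((∑ α ∈ q.support, q.coeff α * ∏ i, x i ^ α i) *
          ∑ β ∈ q.support, q.coeff β * ∏ i, x i ^ β i) := by
        rw [Finset.sum_mul_sum, Finset.mul_sum]
        refine Finset.sum_congr rfl fun α hα => ?_
        rw [Finset.mul_sum]
        refine Finset.sum_congr rfl fun β hβ => ?_
        rw [hw α hα β hβ]
        ring
    _ = s * eval x q ^ 2 := by rw [← eval_eq', sq]

section MomentVector

variable {n : ℕ} {k : ℕ} {c : MvPolynomial (Fin n) ℝ} {x : Fin n → ℝ}

lemma locEntry_monoVec (hc : ceilHalf c.totalDegree ≤ k) {α β : Fin n →₀ ℕ}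
    (hα : mdeg α ≤ k - ceilHalf c.totalDegree) (hβ : mdeg β ≤ k - ceilHalf c.totalDegree) :
    locEntry c (monoVec k x) α β = eval x c * ((∏ i, x i ^ α i) * ∏ i, x i ^ β i) := by
  have hc2 := le_two_mul_ceilHalf c.totalDegree
  rw [locEntry, eval_eq', Finset.sum_mul]
  refine Finset.sum_congr rfl fun γ hγ => ?_
  have hγ := mdeg_le_totalDegree hγ
  rw [monoVec_of_mdeg_le x (by rw [mdeg_add, mdeg_add]; omega), prod_pow_add, prod_pow_add]
  ring

lemma momMatPSD_monoVec : momMatPSD k (monoVec k x) := by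
  intro q hq
  rw [quadForm_eq_mul_eval_sq q x 1 fun α hα β hβ => by
    have := mdeg_le_totalDegree hα
    have := mdeg_le_totalDegree hβ
    rw [one_mul, monoVec_of_mdeg_le x (by rw [mdeg_add]; omega), prod_pow_add]]
  positivity

lemma locMatZero_monoVec (hc : ceilHalf c.totalDegree ≤ k) (hx : eval x c = 0) :
    locMatZero c k (monoVec k x) := by
  intro α β hα hβ
  rw [locEntry_monoVec hc hα hβ, hx, zero_mul]

lemma locMatPSD_monoVec (hc : ceilHalf c.totalDegree ≤ k) (hx : 0 ≤ eval x c) :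
    locMatPSD c k (monoVec k x) := by
  intro q hq
  rw [quadForm_eq_mul_eval_sq q x (eval x c) fun α hα β hβ =>
    locEntry_monoVec hc ((mdeg_le_totalDegree hα).trans hq) ((mdeg_le_totalDegree hβ).trans hq)]
  positivity

lemma momFeasible_monoVec {Eqs Ineqs : Set (MvPolynomial (Fin n) ℝ)}
    (hdeg : ∀ c ∈ Eqs ∪ Ineqs, ceilHalf c.totalDegree ≤ k)
    (hEqs : ∀ c ∈ Eqs, eval x c = 0) (hIneqs : ∀ c ∈ Ineqs, 0 ≤ eval x c) :
    momFeasible Eqs Ineqs k (monoVec k x) :=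
  ⟨by simp [monoVec, mdeg], momMatPSD_monoVec,
    fun c hc => locMatZero_monoVec (hdeg c (Or.inl hc)) (hEqs c hc),
    fun c hc => locMatPSD_monoVec (hdeg c (Or.inr hc)) (hIneqs c hc)⟩

end MomentVector

section RankOne

variable {n k : ℕ} {c : MvPolynomial (Fin n) ℝ} {x : Fin n → ℝ} {y : (Fin n →₀ ℕ) → ℝ}

lemma locEntry_zero_zero (hy : ∀ γ ∈ c.support, y γ = ∏ i, x i ^ γ i) :
    locEntry c y 0 0 = eval x c := by
  simpa only [locEntry, pairing, add_zero] using pairing_eq_eval hy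

lemma eval_eq_zero_of_locMatZero (hc : locMatZero c k y)
    (hy : ∀ γ ∈ c.support, y γ = ∏ i, x i ^ γ i) : eval x c = 0 := by
  rw [← locEntry_zero_zero hy]
  exact hc 0 0 (by simp [mdeg]) (by simp [mdeg])

lemma eval_nonneg_of_locMatPSD (hc : locMatPSD c k y)
    (hy : ∀ γ ∈ c.support, y γ = ∏ i, x i ^ γ i) : 0 ≤ eval x c := by
  have h := hc 1 (by simp)
  rw [← C_1, support_C, if_neg one_ne_zero] at h
  simpa [locEntry_zero_zero hy] using h

end RankOne

lemma fMax_le_fMomK {n m : ℕ} {a : Fin m → ℝ} {p : Fin m → MvPolynomial (Fin n) ℝ}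
    {K : Set (Fin n → ℝ)} {Eqs Ineqs : Set (MvPolynomial (Fin n) ℝ)} {k : ℕ}
    (hp : ∀ i, (p i).totalDegree ≤ 2 * k)
    (hK : ∀ x ∈ K, momFeasible Eqs Ineqs k (monoVec k x)) :
    fMax a p K ≤ fMomK a p Eqs Ineqs k := by
  refine sSup_le ?_
  rintro _ ⟨x, hx, rfl⟩
  refine le_sSup ⟨monoVec k x, hK x hx, objVal_eq_fObj fun i γ hγ => ?_⟩
  exact monoVec_of_mdeg_le x ((mdeg_le_totalDegree hγ).trans (hp i))

theorem global_maximizer_of_rank_one_general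
    {n m : ℕ} {ι : Type*} [DecidableEq ι]
    (E I : Finset ι)
    (c : ι → MvPolynomial (Fin n) ℝ)
    (K : Set (Fin n → ℝ))
    (hK : K = {x | (∀ j ∈ E, eval x (c j) = 0) ∧ ∀ j ∈ I, 0 ≤ eval x (c j)})
    (a : Fin m → ℝ)
    (p : Fin m → MvPolynomial (Fin n) ℝ)
    (d : ℕ)
    (hd : d = (Finset.univ.sup fun i => ceilHalf (p i).totalDegree) ⊔
      ((E ∪ I).sup fun j => ceilHalf (c j).totalDegree))
    (k : ℕ) (hdk : d ≤ k)
    (ystar : (Fin n →₀ ℕ) → ℝ)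
    (hfeas : momFeasible (c '' ↑E) (c '' ↑I) k ystar)
    (hopt : objVal a p ystar = fMomK a p (c '' ↑E) (c '' ↑I) k)
    (hrank1 : ∀ α : Fin n →₀ ℕ, mdeg α ≤ 2 * d →
      ystar α = ∏ i, (ystar (Finsupp.single i 1)) ^ α i) :
    (fun i => ystar (Finsupp.single i 1)) ∈ K ∧
    fMax a p K = fMomK a p (c '' ↑E) (c '' ↑I) k ∧
    fObj a p (fun i => ystar (Finsupp.single i 1)) = fMax a p K := by
  set v : Fin n → ℝ := fun i => ystar (Finsupp.single i 1)
  have hp : ∀ i, ceilHalf (p i).totalDegree ≤ d := fun i =>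
    hd ▸ le_sup_of_le_left (Finset.le_sup (f := fun i => ceilHalf (p i).totalDegree) (mem_univ i))
  have hc : ∀ j ∈ E ∪ I, ceilHalf (c j).totalDegree ≤ d := fun j hj =>
    hd ▸ le_sup_of_le_right (Finset.le_sup (f := fun j => ceilHalf (c j).totalDegree) hj)
  have hle_two_mul : ∀ {t}, ceilHalf t ≤ d → t ≤ 2 * d := fun h =>
    (le_two_mul_ceilHalf _).trans (Nat.mul_le_mul_left 2 h)
  have hagree : ∀ q : MvPolynomial (Fin n) ℝ, ceilHalf q.totalDegree ≤ d →
      ∀ γ ∈ q.support, ystar γ = ∏ i, v i ^ γ i := fun q hq γ hγ =>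
    hrank1 γ ((mdeg_le_totalDegree hγ).trans (hle_two_mul hq))
  have hvK : v ∈ K := hK ▸
    ⟨fun j hj => eval_eq_zero_of_locMatZero (hfeas.2.2.1 _ (Set.mem_image_of_mem c hj))
        (hagree _ (hc j (mem_union_left I hj))),
      fun j hj => eval_nonneg_of_locMatPSD (hfeas.2.2.2 _ (Set.mem_image_of_mem c hj))
        (hagree _ (hc j (mem_union_right E hj)))⟩
  have hobj : objVal a p ystar = fObj a p v := objVal_eq_fObj fun i => hagree _ (hp i)
  have hle : fMax a p K ≤ fMomK a p (c '' ↑E) (c '' ↑I) k := by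
    refine fMax_le_fMomK (fun i => ?_) fun x hx => momFeasible_monoVec ?_ ?_ ?_
    · exact (hle_two_mul (hp i)).trans (Nat.mul_le_mul_left 2 hdk)
    · rintro _ (⟨j, hj, rfl⟩ | ⟨j, hj, rfl⟩)
      exacts [(hc j (mem_union_left I hj)).trans hdk, (hc j (mem_union_right E hj)).trans hdk]
    · rintro _ ⟨j, hj, rfl⟩; exact (hK ▸ hx).1 j hj
    · rintro _ ⟨j, hj, rfl⟩; exact (hK ▸ hx).2 j hj
  have hge : fMomK a p (c '' ↑E) (c '' ↑I) k ≤ fMax a p K :=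
    hopt ▸ hobj ▸ le_sSup ⟨v, hvK, rfl⟩
  have hmax : fMax a p K = fMomK a p (c '' ↑E) (c '' ↑I) k := le_antisymm hle hge
  exact ⟨hvK, hmax, by rw [hmax, ← hopt, hobj]⟩

/-- **Corollary 4.2.**  If a maximizer `y*` of the `k`-th order
moment relaxation satisfies `y*_α = (v*)^α` for all `|α| ≤ 2d`, where
`v* = (y*_{e₁},…,y*_{e_n})`, then `v* ∈ K`, `f_max = f_mom,k`, and `v*` is a
global maximizer of (P). -/
theorem global_maximizer_of_rank_one
    {n m : ℕ} (hm : 1 ≤ m) {ι : Type*} [DecidableEq ι]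
    (E I : Finset ι) (hEI : Disjoint E I)
    (c : ι → MvPolynomial (Fin n) ℝ)
    (K : Set (Fin n → ℝ))
    (hK : K = {x | (∀ j ∈ E, eval x (c j) = 0) ∧ ∀ j ∈ I, 0 ≤ eval x (c j)})
    (a : Fin m → ℝ) (ha : ∀ i, 0 < a i)
    (p : Fin m → MvPolynomial (Fin n) ℝ)
    (hp : ∀ i, ∀ x ∈ K, 0 ≤ eval x (p i))
    (d : ℕ)
    (hd : d = (Finset.univ.sup fun i => ceilHalf (p i).totalDegree) ⊔
      ((E ∪ I).sup fun j => ceilHalf (c j).totalDegree))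
    (k : ℕ) (hdk : d ≤ k)
    (ystar : (Fin n →₀ ℕ) → ℝ)
    (hfeas : momFeasible (c '' ↑E) (c '' ↑I) k ystar)
    (hopt : objVal a p ystar = fMomK a p (c '' ↑E) (c '' ↑I) k)
    (hrank1 : ∀ α : Fin n →₀ ℕ, mdeg α ≤ 2 * d →
      ystar α = ∏ i, (ystar (Finsupp.single i 1)) ^ α i) :
    (fun i => ystar (Finsupp.single i 1)) ∈ K ∧
    fMax a p K = fMomK a p (c '' ↑E) (c '' ↑I) k ∧
    fObj a p (fun i => ystar (Finsupp.single i 1)) = fMax a p K :=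
  global_maximizer_of_rank_one_general E I c K hK a p d hd k hdk ystar hfeas hopt hrank1

end
end

section
/- (Theorem 4.4) Assume c_j is SOS-concave for every j ∈ I, each c_j with j ∈ E has degree at most 1 (is affine-linear), and each p_i, i ∈ [m], is SOS-concave. Then f_mom,k = f_max for every relaxation order k ≥ d. In addition, if the k-th order moment relaxation has a maximizer y*, then v* = (y*_{e_1},…,y*_{e_n}) (the vector of entries of y* indexed by the unit multi-indices) is a global maximizer of (P). -/
open MvPolynomial Finset Filter Topology

noncomputable section

/-- A polynomial `q` is SOS-convex if its Hessian `∇²q` equals `R(x)ᵀ R(x)`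
for some matrix `R(x)` with polynomial entries. -/
def IsSOSConvex {n : ℕ} (q : MvPolynomial (Fin n) ℝ) : Prop :=
  ∃ (t : ℕ) (R : Fin t → Fin n → MvPolynomial (Fin n) ℝ),
    ∀ i j : Fin n, pderiv i (pderiv j q) = ∑ s, R s i * R s j

/-- A polynomial `q` is SOS-concave if `-q` is SOS-convex. -/
def IsSOSConcave {n : ℕ} (q : MvPolynomial (Fin n) ℝ) : Prop :=
  IsSOSConvex (-q)

/-!
Exactness comes from a Jensen inequality for pseudo-moments: if `y` is feasible for the
relaxation of order `k` and `v = (y_{e₁}, …, y_{eₙ})`, then `g(v) ≤ L_y(g)` for every SOS-convex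
`g` of degree at most `2k`. Applied to `-pᵢ`, to `-c_j` (`j ∈ I`) and to `±c_j` (`j ∈ E`, affine),
it shows that `v ∈ K` and that the relaxed objective at `y` is at most `f(v)`. Conversely the
moment vector `(x^α)_α` of a point `x ∈ K` is feasible with objective value `f(x)`.
-/

section CoeffwiseLinearMap

variable {R A : Type*} [CommSemiring R] [CommSemiring A] [Algebra R A]

def Polynomial.mapCoeffsLinear (L : A →ₗ[R] R) (Φ : Polynomial A) : Polynomial R :=
  Φ.sum fun j a => Polynomial.monomial j (L a)

theorem Polynomial.coeff_mapCoeffsLinear (L : A →ₗ[R] R) (Φ : Polynomial A) (j : ℕ) :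
    (Φ.mapCoeffsLinear L).coeff j = L (Φ.coeff j) := by
  classical
  rw [Polynomial.mapCoeffsLinear, Polynomial.coeff_sum, Polynomial.sum_def]
  simp only [Polynomial.coeff_monomial, Finset.sum_ite_eq', Polynomial.mem_support_iff]
  split_ifs with h
  · rfl
  · rw [not_not.mp h, map_zero]

theorem Polynomial.eval_mapCoeffsLinear (L : A →ₗ[R] R) (Φ : Polynomial A) (u : R) :
    (Φ.mapCoeffsLinear L).eval u = L (Φ.eval (algebraMap R A u)) := by
  rw [Polynomial.mapCoeffsLinear, Polynomial.sum_def, Polynomial.eval_finsetSum,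
    Polynomial.eval_eq_sum, Polynomial.sum_def, map_sum]
  refine Finset.sum_congr rfl fun j _ => ?_
  rw [Polynomial.eval_monomial, ← map_pow, ← Algebra.commutes, ← Algebra.smul_def, map_smul,
    smul_eq_mul, mul_comm]

theorem Polynomial.derivative_mapCoeffsLinear (L : A →ₗ[R] R) (Φ : Polynomial A) :
    Polynomial.derivative (Φ.mapCoeffsLinear L)
      = (Polynomial.derivative Φ).mapCoeffsLinear L := by
  ext j
  rw [Polynomial.coeff_derivative, Polynomial.coeff_mapCoeffsLinear,
    Polynomial.coeff_mapCoeffsLinear, Polynomial.coeff_derivative,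
    show ((j : A) + 1) = algebraMap R A ((j : R) + 1) by simp, ← Algebra.commutes,
    ← Algebra.smul_def, map_smul, smul_eq_mul, mul_comm]

end CoeffwiseLinearMap

theorem Polynomial.eval_zero_add_eval_derivative_zero_le_eval_one (φ : Polynomial ℝ)
    (h : ∀ u ∈ Set.Icc (0 : ℝ) 1, 0 ≤ (Polynomial.derivative (Polynomial.derivative φ)).eval u) :
    φ.eval 0 + (Polynomial.derivative φ).eval 0 ≤ φ.eval 1 := by
  have hmono : MonotoneOn (fun u => (Polynomial.derivative φ).eval u) (Set.Icc 0 1) :=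
    monotoneOn_of_deriv_nonneg (convex_Icc 0 1) (Polynomial.derivative φ).continuousOn
      (Polynomial.derivative φ).differentiableOn fun u hu => by
        rw [Polynomial.deriv]; exact h u (interior_subset hu)
  obtain ⟨ξ, hξ, hslope⟩ := exists_deriv_eq_slope (fun u => φ.eval u) zero_lt_one
    φ.continuousOn φ.differentiableOn
  rw [Polynomial.deriv, sub_zero, div_one] at hslope
  have := hmono ⟨le_rfl, zero_le_one⟩ (Set.Ioo_subset_Icc_self hξ) hξ.1.le
  simp only at this
  linarith

theorem derivative_aeval_eq_sum_pderiv {σ R A : Type*} [Fintype σ] [CommSemiring R]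
    [CommSemiring A] [Algebra R A] (f : σ → Polynomial A) (q : MvPolynomial σ R) :
    Polynomial.derivative (aeval f q)
      = ∑ i, aeval f (pderiv i q) * Polynomial.derivative (f i) := by
  classical
  induction q using MvPolynomial.induction_on with
  | C r => simp [Polynomial.algebraMap_apply]
  | add p q hp hq => simp only [map_add, hp, hq, add_mul, Finset.sum_add_distrib]
  | mul_X p j ih =>
    simp only [map_mul, Polynomial.derivative_mul, ih, aeval_X, Derivation.leibniz, pderiv_X,
      smul_eq_mul, map_add, add_mul, Finset.sum_add_distrib, Finset.sum_mul]
    simp [Pi.single_apply, mul_assoc, mul_comm, add_comm]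

section Degree

variable {σ R : Type*} [CommSemiring R]

theorem totalDegree_aeval_le {τ : Type*} {g : σ → MvPolynomial τ R}
    (hg : ∀ i, (g i).totalDegree ≤ 1) (q : MvPolynomial σ R) :
    (aeval g q).totalDegree ≤ q.totalDegree := by
  conv_lhs => rw [q.as_sum, map_sum]
  refine (totalDegree_finsetSum _ _).trans (Finset.sup_le fun d hd => ?_)
  rw [aeval_monomial, algebraMap_eq, Finsupp.prod]
  calc (C (q.coeff d) * ∏ i ∈ d.support, g i ^ d i : MvPolynomial τ R).totalDegree
      ≤ (C (q.coeff d) : MvPolynomial τ R).totalDegree + ∑ i ∈ d.support, (g i ^ d i).totalDegree :=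
        (totalDegree_mul _ _).trans (Nat.add_le_add_left (totalDegree_finsetProd _ _) _)
    _ ≤ 0 + ∑ i ∈ d.support, d i * 1 :=
        Nat.add_le_add (totalDegree_C _).le (Finset.sum_le_sum fun i _ =>
          (totalDegree_pow _ _).trans (Nat.mul_le_mul_left _ (hg i)))
    _ ≤ q.totalDegree := by
        simp only [zero_add, mul_one]
        exact le_totalDegree hd

theorem totalDegree_pderiv_le [Fintype σ] (i : σ) (q : MvPolynomial σ R) :
    (pderiv i q).totalDegree ≤ q.totalDegree - 1 := by
  conv_lhs => rw [← sum_homogeneousComponent q, map_sum]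
  refine (totalDegree_finsetSum _ _).trans (Finset.sup_le fun j hj => ?_)
  refine ((homogeneousComponent_isHomogeneous j q).pderiv).totalDegree_le.trans ?_
  have := Finset.mem_range.mp hj
  omega

theorem homogeneousComponent_add_mul {f g : MvPolynomial σ R} {a b : ℕ}
    (hf : f.totalDegree ≤ a) (hg : g.totalDegree ≤ b) :
    homogeneousComponent (a + b) (f * g) = homogeneousComponent a f * homogeneousComponent b g := by
  classical
  ext d
  rw [coeff_homogeneousComponent]
  split_ifs with hd
  · rw [coeff_mul, coeff_mul]
    refine Finset.sum_congr rfl fun e he => ?_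
    rw [HasAntidiagonal.mem_antidiagonal] at he
    have hsum : e.1.degree + e.2.degree = a + b := by rw [← map_add, he, hd]
    rw [coeff_homogeneousComponent, coeff_homogeneousComponent]
    by_cases h1 : e.1.degree = a
    · rw [if_pos h1, if_pos (by omega)]
    rw [if_neg h1, zero_mul]
    rcases Nat.lt_or_gt_of_ne h1 with h1 | h1
    · rw [coeff_eq_zero_of_totalDegree_lt (f := g) (show g.totalDegree < e.2.degree by omega),
        mul_zero]
    · rw [coeff_eq_zero_of_totalDegree_lt (f := f) (show f.totalDegree < e.1.degree by omega),
        zero_mul]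
  · exact (((homogeneousComponent_isHomogeneous a f).mul
      (homogeneousComponent_isHomogeneous b g)).coeff_eq_zero hd).symm

theorem homogeneousComponent_totalDegree_ne_zero {f : MvPolynomial σ R} (hf : f ≠ 0) :
    homogeneousComponent f.totalDegree f ≠ 0 := by
  obtain ⟨d, hd, hdeg⟩ := Finset.exists_mem_eq_sup f.support (support_nonempty.mpr hf)
    fun s => s.sum fun _ e => e
  have hdeg' : d.degree = f.totalDegree := hdeg.symm
  intro h
  have := congrArg (coeff d) h
  rw [coeff_homogeneousComponent, if_pos hdeg', coeff_zero] at this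
  exact mem_support_iff.mp hd this

end Degree

section SumOfSquares

variable {σ ι : Type*} [Fintype ι]

theorem eq_zero_of_sum_mul_self_eq_zero {f : ι → MvPolynomial σ ℝ} (h : ∑ j, f j * f j = 0)
    (i : ι) : f i = 0 := by
  refine MvPolynomial.funext fun x => ?_
  have hx := congrArg (eval x) h
  simp only [map_sum, map_mul, map_zero] at hx
  rw [map_zero, ← mul_self_eq_zero]
  exact (Finset.sum_eq_zero_iff_of_nonneg fun j _ => mul_self_nonneg _).mp hx i
    (Finset.mem_univ i)

/-- The top homogeneous components of the squares cannot cancel. -/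
theorem two_mul_totalDegree_le_totalDegree_sum_mul_self (f : ι → MvPolynomial σ ℝ) (i : ι) :
    2 * (f i).totalDegree ≤ (∑ j, f j * f j).totalDegree := by
  set D := Finset.univ.sup fun j => (f j).totalDegree
  have hfD : ∀ j, (f j).totalDegree ≤ D := fun j =>
    Finset.le_sup (f := fun j => (f j).totalDegree) (Finset.mem_univ j)
  suffices h : 2 * D ≤ (∑ j, f j * f j).totalDegree from le_trans (by have := hfD i; omega) h
  rcases Nat.eq_zero_or_pos D with hD | hD
  · simp [hD]
  obtain ⟨j, -, hj⟩ := Finset.exists_mem_eq_sup Finset.univ ⟨i, Finset.mem_univ i⟩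
    fun j => (f j).totalDegree
  have hfj : f j ≠ 0 := fun h0 => by simp [D, hj, h0] at hD
  have htop : homogeneousComponent (2 * D) (∑ j, f j * f j)
      = ∑ j, homogeneousComponent D (f j) * homogeneousComponent D (f j) := by
    rw [map_sum, two_mul]
    exact Finset.sum_congr rfl fun j _ => homogeneousComponent_add_mul (hfD j) (hfD j)
  have hne : homogeneousComponent (2 * D) (∑ j, f j * f j) ≠ 0 := by
    rw [htop]
    intro h0
    exact homogeneousComponent_totalDegree_ne_zero hfj (hj ▸ eq_zero_of_sum_mul_self_eq_zero h0 j)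
  by_contra hlt
  exact hne (homogeneousComponent_eq_zero _ _ (not_le.mp hlt))

end SumOfSquares

theorem totalDegree_add_one_le_ceilHalf_of_hessian_eq {n t : ℕ} {g : MvPolynomial (Fin n) ℝ}
    {R : Fin t → Fin n → MvPolynomial (Fin n) ℝ}
    (hR : ∀ i j, pderiv i (pderiv j g) = ∑ s, R s i * R s j) {s : Fin t} {i : Fin n}
    (hne : R s i ≠ 0) :
    (R s i).totalDegree + 1 ≤ ceilHalf g.totalDegree := by
  have hsq := two_mul_totalDegree_le_totalDegree_sum_mul_self (fun s => R s i) s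
  rw [← hR i i] at hsq
  have hii : pderiv i (pderiv i g) ≠ 0 := by
    rw [hR i i]
    exact fun h0 => hne (eq_zero_of_sum_mul_self_eq_zero h0 s)
  have h2 := totalDegree_pderiv_le i (pderiv i g)
  have h1 := totalDegree_pderiv_le i g
  have hpos : 1 ≤ (pderiv i g).totalDegree := by
    by_contra h0
    have hC := totalDegree_eq_zero_iff_eq_C.mp (by omega : (pderiv i g).totalDegree = 0)
    exact hii (by rw [hC, pderiv_C])
  unfold ceilHalf
  omega

section Pairing

variable {n : ℕ}

def pairingLinear (y : (Fin n →₀ ℕ) → ℝ) : MvPolynomial (Fin n) ℝ →ₗ[ℝ] ℝ :=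
  Finsupp.linearCombination ℝ y ∘ₗ (AddMonoidAlgebra.coeffLinearEquiv ℝ).toLinearMap

theorem pairingLinear_apply (y : (Fin n →₀ ℕ) → ℝ) (q : MvPolynomial (Fin n) ℝ) :
    pairingLinear y q = pairing q y := by
  rw [pairingLinear, LinearMap.comp_apply, Finsupp.linearCombination_apply, Finsupp.sum]
  rfl

theorem pairing_monomial (y : (Fin n →₀ ℕ) → ℝ) (α : Fin n →₀ ℕ) (r : ℝ) :
    pairing (monomial α r) y = r * y α := by
  by_cases hr : r = 0
  · simp [pairing, hr]
  · simp [pairing, support_monomial, hr, coeff_monomial]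

theorem pairingLinear_C (y : (Fin n →₀ ℕ) → ℝ) (r : ℝ) : pairingLinear y (C r) = r * y 0 := by
  rw [pairingLinear_apply, C_apply, pairing_monomial]

theorem pairingLinear_X (y : (Fin n →₀ ℕ) → ℝ) (i : Fin n) :
    pairingLinear y (X i) = y (Finsupp.single i 1) := by
  rw [pairingLinear_apply, X, pairing_monomial, one_mul]

theorem pairing_mul (y : (Fin n →₀ ℕ) → ℝ) (p q : MvPolynomial (Fin n) ℝ) :
    pairing (p * q) y
      = ∑ α ∈ p.support, ∑ β ∈ q.support, p.coeff α * q.coeff β * y (α + β) := by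
  rw [← pairingLinear_apply]
  conv_lhs => rw [p.as_sum, q.as_sum, Finset.sum_mul_sum]
  simp only [map_sum, monomial_mul, pairingLinear_apply, pairing_monomial]

def firstMoments (y : (Fin n →₀ ℕ) → ℝ) : Fin n → ℝ := fun i => y (Finsupp.single i 1)

theorem pairing_mul_self_nonneg_of_momMatPSD {k : ℕ} {y : (Fin n →₀ ℕ) → ℝ} (hM : momMatPSD k y)
    {q : MvPolynomial (Fin n) ℝ} (hq : q.totalDegree ≤ k) : 0 ≤ pairing (q * q) y := by
  rw [pairing_mul]
  exact hM q hq

end Pairing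

section LineRestriction

variable {n : ℕ} (v : Fin n → ℝ)

/-- `q(v + t (x - v))`, as a polynomial in `t` with coefficients in `ℝ[x]`. -/
def lineRestrict : MvPolynomial (Fin n) ℝ →ₐ[ℝ] Polynomial (MvPolynomial (Fin n) ℝ) :=
  aeval fun i => Polynomial.C (C (v i)) + Polynomial.X * Polynomial.C (X i - C (v i))

theorem eval_lineRestrict (u : ℝ) (q : MvPolynomial (Fin n) ℝ) :
    (lineRestrict v q).eval (C u) = aeval (fun i => C (v i) + C u * (X i - C (v i))) q := by
  induction q using MvPolynomial.induction_on with
  | C r => simp [lineRestrict, Polynomial.algebraMap_apply]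
  | add p q hp hq => simp only [map_add, Polynomial.eval_add, hp, hq]
  | mul_X p i ih =>
    rw [map_mul, Polynomial.eval_mul, ih, map_mul]
    simp [lineRestrict]

theorem eval_zero_lineRestrict (q : MvPolynomial (Fin n) ℝ) :
    (lineRestrict v q).eval (C 0) = C (eval v q) := by
  rw [eval_lineRestrict]
  simpa [Function.comp_def] using aeval_C_comp_left (ι := Fin n) v q

theorem eval_one_lineRestrict (q : MvPolynomial (Fin n) ℝ) : (lineRestrict v q).eval (C 1) = q := by
  rw [eval_lineRestrict]
  simp

theorem derivative_lineRestrict (q : MvPolynomial (Fin n) ℝ) :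
    Polynomial.derivative (lineRestrict v q)
      = ∑ i, lineRestrict v (pderiv i q) * Polynomial.C (X i - C (v i)) := by
  simp [lineRestrict, derivative_aeval_eq_sum_pderiv]

theorem derivative_derivative_lineRestrict {t : ℕ} {g : MvPolynomial (Fin n) ℝ}
    {R : Fin t → Fin n → MvPolynomial (Fin n) ℝ}
    (hR : ∀ i j, pderiv i (pderiv j g) = ∑ s, R s i * R s j) :
    Polynomial.derivative (Polynomial.derivative (lineRestrict v g))
      = ∑ s, (∑ i, lineRestrict v (R s i) * Polynomial.C (X i - C (v i))) ^ 2 := by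
  simp only [derivative_lineRestrict, map_sum, Polynomial.derivative_mul, Polynomial.derivative_C,
    mul_zero, add_zero, hR, Finset.sum_mul, map_mul, sq, Finset.mul_sum]
  rw [Finset.sum_congr rfl fun a (_ : a ∈ Finset.univ) =>
    Finset.sum_comm (s := Finset.univ) (t := Finset.univ), Finset.sum_comm]
  refine Finset.sum_congr rfl fun s _ => Finset.sum_congr rfl fun a _ =>
    Finset.sum_congr rfl fun b _ => by ring

end LineRestriction

section Jensen

variable {n k : ℕ} {y : (Fin n →₀ ℕ) → ℝ}

theorem totalDegree_C_add_C_mul_X_sub_C_le_one (i : Fin n) (a b c : ℝ) :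
    (C a + C b * (X i - C c) : MvPolynomial (Fin n) ℝ).totalDegree ≤ 1 :=
  (totalDegree_add _ _).trans <| max_le (by simp) <| (totalDegree_mul _ _).trans <| by
    simpa using (totalDegree_sub_C_le _ _).trans (totalDegree_X i).le

theorem totalDegree_sum_eval_lineRestrict_mul_le {t : ℕ} {g : MvPolynomial (Fin n) ℝ}
    {R : Fin t → Fin n → MvPolynomial (Fin n) ℝ}
    (hR : ∀ i j, pderiv i (pderiv j g) = ∑ s, R s i * R s j) (hk : ceilHalf g.totalDegree ≤ k)
    (v : Fin n → ℝ) (u : ℝ) (s : Fin t) :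
    (∑ i, (lineRestrict v (R s i)).eval (C u) * (X i - C (v i))).totalDegree ≤ k := by
  refine (totalDegree_finsetSum _ _).trans (Finset.sup_le fun i _ => ?_)
  by_cases h0 : R s i = 0
  · simp [h0]
  have hR' := totalDegree_add_one_le_ceilHalf_of_hessian_eq hR h0
  have heval : ((lineRestrict v (R s i)).eval (C u)).totalDegree ≤ (R s i).totalDegree := by
    rw [eval_lineRestrict]
    exact totalDegree_aeval_le (fun j => totalDegree_C_add_C_mul_X_sub_C_le_one j _ _ _) _
  have hlin : (X i - C (v i) : MvPolynomial (Fin n) ℝ).totalDegree ≤ 1 := by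
    simpa using totalDegree_C_add_C_mul_X_sub_C_le_one i 0 1 (v i)
  calc _ ≤ _ := totalDegree_mul _ _
    _ ≤ (R s i).totalDegree + 1 := Nat.add_le_add heval hlin
    _ ≤ k := hR'.trans hk

/-- Restrict `g` to the segment from `v = firstMoments y` to `x` and apply `L_y`
coefficientwise: the resulting real polynomial `φ` has `φ(0) = g(v)`, `φ'(0) = 0` (as
`L_y(xᵢ) = vᵢ`), `φ(1) = L_y(g)`, and `φ'' ≥ 0` since `∂²ₜ g(v + t(x - v))` is a sum of squares
of polynomials of degree at most `k`. -/
theorem eval_firstMoments_le_pairing (hy0 : y 0 = 1) (hM : momMatPSD k y)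
    {g : MvPolynomial (Fin n) ℝ} (hg : IsSOSConvex g) (hk : ceilHalf g.totalDegree ≤ k) :
    eval (firstMoments y) g ≤ pairing g y := by
  obtain ⟨t, R, hR⟩ := hg
  set v := firstMoments y
  set φ := (lineRestrict v g).mapCoeffsLinear (pairingLinear y)
  have hφ : ∀ (Ψ : Polynomial (MvPolynomial (Fin n) ℝ)) (u : ℝ),
      (Ψ.mapCoeffsLinear (pairingLinear y)).eval u = pairing (Ψ.eval (C u)) y := fun Ψ u => by
    rw [Polynomial.eval_mapCoeffsLinear, algebraMap_eq, pairingLinear_apply]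
  have h1 : φ.eval 1 = pairing g y := by rw [hφ, eval_one_lineRestrict]
  have h0 : φ.eval 0 = eval v g := by
    rw [hφ, eval_zero_lineRestrict, ← pairingLinear_apply, pairingLinear_C, hy0, mul_one]
  have h0' : (Polynomial.derivative φ).eval 0 = 0 := by
    rw [Polynomial.derivative_mapCoeffsLinear, hφ, derivative_lineRestrict,
      Polynomial.eval_finsetSum, ← pairingLinear_apply, map_sum]
    refine Finset.sum_eq_zero fun i _ => ?_
    rw [Polynomial.eval_mul, Polynomial.eval_C, eval_zero_lineRestrict, C_mul', map_smul,
      map_sub, pairingLinear_X, pairingLinear_C, hy0, mul_one]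
    exact smul_eq_zero_of_right _ (sub_self _)
  have h2 : ∀ u, 0 ≤ (Polynomial.derivative (Polynomial.derivative φ)).eval u := by
    intro u
    rw [Polynomial.derivative_mapCoeffsLinear, Polynomial.derivative_mapCoeffsLinear, hφ,
      derivative_derivative_lineRestrict v hR, ← pairingLinear_apply]
    simp only [Polynomial.eval_finsetSum, Polynomial.eval_mul, Polynomial.eval_C, map_sum, sq]
    refine Finset.sum_nonneg fun s _ => ?_
    rw [pairingLinear_apply]
    exact pairing_mul_self_nonneg_of_momMatPSD hM
      (totalDegree_sum_eval_lineRestrict_mul_le hR hk v u s)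
  have := φ.eval_zero_add_eval_derivative_zero_le_eval_one fun u _ => h2 u
  rwa [h0, h0', h1, add_zero] at this

theorem pairing_le_eval_firstMoments (hy0 : y 0 = 1) (hM : momMatPSD k y)
    {g : MvPolynomial (Fin n) ℝ} (hg : IsSOSConcave g) (hk : ceilHalf g.totalDegree ≤ k) :
    pairing g y ≤ eval (firstMoments y) g := by
  have := eval_firstMoments_le_pairing hy0 hM hg (by rwa [totalDegree_neg])
  rw [map_neg, ← pairingLinear_apply, map_neg, pairingLinear_apply] at this
  linarith

end Jensen

theorem isSOSConvex_of_totalDegree_le_one {n : ℕ} {q : MvPolynomial (Fin n) ℝ}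
    (hq : q.totalDegree ≤ 1) : IsSOSConvex q := by
  refine ⟨0, Fin.elim0, fun i j => ?_⟩
  have hj : (pderiv j q).totalDegree = 0 := by have := totalDegree_pderiv_le j q; omega
  rw [totalDegree_eq_zero_iff_eq_C.mp hj, pderiv_C, Finset.univ_eq_empty, Finset.sum_empty]

section Relaxation

variable {n k : ℕ} {y : (Fin n →₀ ℕ) → ℝ}

theorem pairing_eq_eval_firstMoments_of_totalDegree_le_one (hy0 : y 0 = 1) (hM : momMatPSD k y)
    {q : MvPolynomial (Fin n) ℝ} (hq : q.totalDegree ≤ 1) (hk : ceilHalf q.totalDegree ≤ k) :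
    pairing q y = eval (firstMoments y) q :=
  le_antisymm
    (pairing_le_eval_firstMoments hy0 hM
      (isSOSConvex_of_totalDegree_le_one (by rwa [totalDegree_neg])) hk)
    (eval_firstMoments_le_pairing hy0 hM (isSOSConvex_of_totalDegree_le_one hq) hk)

theorem locEntry_zero_zero_s11 (c : MvPolynomial (Fin n) ℝ) : locEntry c y 0 0 = pairing c y := by
  simp [locEntry, pairing]

theorem firstMoments_mem_of_momFeasible {Eqs Ineqs : Set (MvPolynomial (Fin n) ℝ)}
    (hEqs : ∀ c ∈ Eqs, c.totalDegree ≤ 1 ∧ ceilHalf c.totalDegree ≤ k)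
    (hIneqs : ∀ c ∈ Ineqs, IsSOSConcave c ∧ ceilHalf c.totalDegree ≤ k)
    (hy : momFeasible Eqs Ineqs k y) :
    (∀ c ∈ Eqs, eval (firstMoments y) c = 0) ∧ ∀ c ∈ Ineqs, 0 ≤ eval (firstMoments y) c := by
  obtain ⟨hy0, hM, hzero, hpsd⟩ := hy
  refine ⟨fun c hc => ?_, fun c hc => ?_⟩
  · rw [← pairing_eq_eval_firstMoments_of_totalDegree_le_one hy0 hM (hEqs c hc).1 (hEqs c hc).2,
      ← locEntry_zero_zero_s11]
    exact hzero c hc 0 0 (by simp [mdeg]) (by simp [mdeg])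
  · refine le_trans ?_ (pairing_le_eval_firstMoments hy0 hM (hIneqs c hc).1 (hIneqs c hc).2)
    simpa [C_apply, support_monomial, locEntry_zero_zero_s11] using hpsd c hc 1 (by simp)

theorem monotone_elog : Monotone elog := by
  intro s t hst
  unfold elog
  split_ifs with hs ht ht
  · exact EReal.coe_le_coe_iff.mpr (Real.log_le_log hs hst)
  · exact absurd (hs.trans_le hst) ht
  · exact bot_le
  · exact le_rfl

theorem objVal_le_fObj_firstMoments {m : ℕ} {a : Fin m → ℝ} (ha : ∀ i, 0 ≤ a i)
    {p : Fin m → MvPolynomial (Fin n) ℝ} (hp : ∀ i, IsSOSConcave (p i))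
    (hpk : ∀ i, ceilHalf (p i).totalDegree ≤ k) (hy0 : y 0 = 1) (hM : momMatPSD k y) :
    objVal a p y ≤ fObj a p (firstMoments y) :=
  Finset.sum_le_sum fun i _ => mul_le_mul_of_nonneg_left
    (monotone_elog (pairing_le_eval_firstMoments hy0 hM (hp i) (hpk i)))
    (EReal.coe_nonneg.mpr (ha i))

def pointMoments (x : Fin n → ℝ) : (Fin n →₀ ℕ) → ℝ := fun α => ∏ i, x i ^ α i

theorem pairing_pointMoments (x : Fin n → ℝ) (q : MvPolynomial (Fin n) ℝ) :
    pairing q (pointMoments x) = eval x q :=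
  (eval_eq' x q).symm

theorem locEntry_pointMoments (x : Fin n → ℝ) (c : MvPolynomial (Fin n) ℝ) (α β : Fin n →₀ ℕ) :
    locEntry c (pointMoments x) α β = eval x c * pointMoments x (α + β) := by
  rw [locEntry, ← pairing_pointMoments, pairing, Finset.sum_mul]
  refine Finset.sum_congr rfl fun γ _ => ?_
  simp only [pointMoments, Finsupp.add_apply, pow_add, Finset.prod_mul_distrib, add_assoc,
    mul_assoc]

theorem momFeasible_pointMoments {Eqs Ineqs : Set (MvPolynomial (Fin n) ℝ)} {x : Fin n → ℝ}
    (hEqs : ∀ c ∈ Eqs, eval x c = 0) (hIneqs : ∀ c ∈ Ineqs, 0 ≤ eval x c) :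
    momFeasible Eqs Ineqs k (pointMoments x) := by
  have hsq : ∀ q : MvPolynomial (Fin n) ℝ, ∑ α ∈ q.support, ∑ β ∈ q.support,
      q.coeff α * q.coeff β * pointMoments x (α + β) = eval x q * eval x q := fun q => by
    rw [← pairing_mul, pairing_pointMoments, map_mul]
  refine ⟨by simp [pointMoments], fun q _ => hsq q ▸ mul_self_nonneg _, ?_, ?_⟩
  · intro c hc α β _ _
    rw [locEntry_pointMoments, hEqs c hc, zero_mul]
  · intro c hc q _
    simp only [locEntry_pointMoments, mul_left_comm _ (eval x c), ← Finset.mul_sum, hsq]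
    exact mul_nonneg (hIneqs c hc) (mul_self_nonneg _)

theorem objVal_pointMoments {m : ℕ} (a : Fin m → ℝ) (p : Fin m → MvPolynomial (Fin n) ℝ)
    (x : Fin n → ℝ) : objVal a p (pointMoments x) = fObj a p x := by
  simp only [objVal, fObj, pairing_pointMoments]

end Relaxation

theorem sos_concave_tightness_general
    {n m : ℕ} {ι : Type*} [DecidableEq ι]
    (E I : Finset ι)
    (c : ι → MvPolynomial (Fin n) ℝ)
    (K : Set (Fin n → ℝ))
    (hK : K = {x | (∀ j ∈ E, eval x (c j) = 0) ∧ ∀ j ∈ I, 0 ≤ eval x (c j)})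
    (a : Fin m → ℝ) (ha : ∀ i, 0 < a i)
    (p : Fin m → MvPolynomial (Fin n) ℝ)
    (hcI : ∀ j ∈ I, IsSOSConcave (c j))
    (hcE : ∀ j ∈ E, (c j).totalDegree ≤ 1)
    (hpconc : ∀ i, IsSOSConcave (p i))
    (d : ℕ)
    (hd : d = (Finset.univ.sup fun i => ceilHalf (p i).totalDegree) ⊔
      ((E ∪ I).sup fun j => ceilHalf (c j).totalDegree)) :
    ∀ k, d ≤ k →
      fMomK a p (c '' ↑E) (c '' ↑I) k = fMax a p K ∧
      ∀ ystar : (Fin n →₀ ℕ) → ℝ,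
        momFeasible (c '' ↑E) (c '' ↑I) k ystar →
        objVal a p ystar = fMomK a p (c '' ↑E) (c '' ↑I) k →
        (fun i => ystar (Finsupp.single i 1)) ∈ K ∧
        fObj a p (fun i => ystar (Finsupp.single i 1)) = fMax a p K := by
  intro k hk
  have hpk : ∀ i, ceilHalf (p i).totalDegree ≤ k := fun i =>
    ((Finset.le_sup (f := fun i => ceilHalf (p i).totalDegree) (Finset.mem_univ i)).trans
      le_sup_left).trans (hd ▸ hk)
  have hck : ∀ j ∈ E ∪ I, ceilHalf (c j).totalDegree ≤ k := fun j hj =>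
    ((Finset.le_sup (f := fun j => ceilHalf (c j).totalDegree) hj).trans le_sup_right).trans
      (hd ▸ hk)
  have hrelax : ∀ y, momFeasible (c '' ↑E) (c '' ↑I) k y →
      firstMoments y ∈ K ∧ objVal a p y ≤ fObj a p (firstMoments y) := fun y hy => by
    have hmem := firstMoments_mem_of_momFeasible
      (Set.forall_mem_image.mpr fun j hj => ⟨hcE j hj, hck j (Finset.mem_union_left I hj)⟩)
      (Set.forall_mem_image.mpr fun j hj => ⟨hcI j hj, hck j (Finset.mem_union_right E hj)⟩) hy
    rw [Set.forall_mem_image, Set.forall_mem_image] at hmem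
    exact ⟨hK ▸ hmem, objVal_le_fObj_firstMoments (fun i => (ha i).le) hpconc hpk hy.1 hy.2.1⟩
  have hpoint : ∀ x ∈ K, momFeasible (c '' ↑E) (c '' ↑I) k (pointMoments x) := fun x hx => by
    rw [hK] at hx
    exact momFeasible_pointMoments (Set.forall_mem_image.mpr hx.1) (Set.forall_mem_image.mpr hx.2)
  have heq : fMomK a p (c '' ↑E) (c '' ↑I) k = fMax a p K := by
    rw [fMomK, fMax, sSup_image, sSup_image]
    exact le_antisymm (iSup₂_mono' fun y hy => ⟨_, (hrelax y hy).1, (hrelax y hy).2⟩)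
      (iSup₂_mono' fun x hx => ⟨_, hpoint x hx, (objVal_pointMoments a p x).ge⟩)
  refine ⟨heq, fun y hy hopt => ⟨(hrelax y hy).1, ?_⟩⟩
  refine le_antisymm (le_sSup (Set.mem_image_of_mem _ (hrelax y hy).1)) ?_
  calc fMax a p K = objVal a p y := heq.symm.trans hopt.symm
    _ ≤ fObj a p (firstMoments y) := (hrelax y hy).2

/-- **Theorem 4.4.**  If every `c_j` with `j ∈ I` is
SOS-concave, every `c_j` with `j ∈ E` is affine-linear, and every `pᵢ` is
SOS-concave, then `f_mom,k = f_max` for every `k ≥ d`; moreover, if the `k`-th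
order moment relaxation has a maximizer `y*`, then
`v* = (y*_{e₁},…,y*_{e_n})` is a global maximizer of (P). -/
theorem sos_concave_tightness
    {n m : ℕ} (hm : 1 ≤ m) {ι : Type*} [DecidableEq ι]
    (E I : Finset ι) (hEI : Disjoint E I)
    (c : ι → MvPolynomial (Fin n) ℝ)
    (K : Set (Fin n → ℝ))
    (hK : K = {x | (∀ j ∈ E, eval x (c j) = 0) ∧ ∀ j ∈ I, 0 ≤ eval x (c j)})
    (a : Fin m → ℝ) (ha : ∀ i, 0 < a i)
    (p : Fin m → MvPolynomial (Fin n) ℝ)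
    (hp : ∀ i, ∀ x ∈ K, 0 ≤ eval x (p i))
    (hcI : ∀ j ∈ I, IsSOSConcave (c j))
    (hcE : ∀ j ∈ E, (c j).totalDegree ≤ 1)
    (hpconc : ∀ i, IsSOSConcave (p i))
    (d : ℕ)
    (hd : d = (Finset.univ.sup fun i => ceilHalf (p i).totalDegree) ⊔
      ((E ∪ I).sup fun j => ceilHalf (c j).totalDegree)) :
    ∀ k, d ≤ k →
      fMomK a p (c '' ↑E) (c '' ↑I) k = fMax a p K ∧
      ∀ ystar : (Fin n →₀ ℕ) → ℝ,
        momFeasible (c '' ↑E) (c '' ↑I) k ystar →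
        objVal a p ystar = fMomK a p (c '' ↑E) (c '' ↑I) k →
        (fun i => ystar (Finsupp.single i 1)) ∈ K ∧
        fObj a p (fun i => ystar (Finsupp.single i 1)) = fMax a p K :=
  sos_concave_tightness_general E I c K hK a ha p hcI hcE hpconc d hd

end
end

section
/- (Example 4.6, positive semidefiniteness consequences) Let y_1, y_2 ∈ ℝ and suppose the 4×4 symmetric matrix with rows (1, y_1, y_2, y_1), (y_1, y_2, y_1, y_2), (y_2, y_1, y_2, y_1), (y_1, y_2, y_1, y_2) is positive semidefinite. Then 0 ≤ y_1² ≤ y_2² ≤ y_2 ≤ 1. -/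
noncomputable section

open scoped ComplexOrder

namespace Matrix.PosSemidef

lemma star_apply_mul_apply_le {n 𝕜 : Type*} [Fintype n] [RCLike 𝕜] {A : Matrix n n 𝕜}
    (hA : A.PosSemidef) (i j : n) : star (A i j) * A i j ≤ A i i * A j j := by
  have hdet := (hA.submatrix ![i, j]).det_nonneg
  have hji : A j i = star (A i j) := (hA.isHermitian.apply j i).symm
  simp only [det_fin_two, submatrix_apply, cons_val_zero, cons_val_one, hji] at hdet
  rwa [mul_comm (A i j), sub_nonneg] at hdet

end Matrix.PosSemidef

/-- **Example 4.6, PSD consequences.**  If the displayed 4×4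
symmetric matrix is positive semidefinite, then `0 ≤ y₁² ≤ y₂² ≤ y₂ ≤ 1`. -/
theorem psd_matrix_consequences (y1 y2 : ℝ)
    (h : (!![(1 : ℝ), y1, y2, y1;
             y1, y2, y1, y2;
             y2, y1, y2, y1;
             y1, y2, y1, y2]).PosSemidef) :
    0 ≤ y1 ^ 2 ∧ y1 ^ 2 ≤ y2 ^ 2 ∧ y2 ^ 2 ≤ y2 ∧ y2 ≤ 1 := by
  have minor₁₂ : y1 * y1 ≤ y2 * y2 := by simpa using h.star_apply_mul_apply_le 1 2
  have minor₀₂ : y2 * y2 ≤ y2 := by simpa using h.star_apply_mul_apply_le 0 2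
  exact ⟨sq_nonneg y1, by nlinarith, by nlinarith, by nlinarith⟩

end
end

section
/- (Example 4.6, relaxation optimal value) Let a > 0. Over all (y_1, y_2) ∈ ℝ² such that the 4×4 symmetric matrix with rows (1, y_1, y_2, y_1), (y_1, y_2, y_1, y_2), (y_2, y_1, y_2, y_1), (y_1, y_2, y_1, y_2) is positive semidefinite, the quantities y_2 − 2y_1 + 1 + a and y_2 + 2y_1 + 1 + a are strictly positive, and the maximum of log(y_2 − 2y_1 + 1 + a) + log(y_2 + 2y_1 + 1 + a) equals 2·log(a + 2), attained at (y_1, y_2) = (0, 1). -/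
/-!
Positive semidefiniteness of the moment matrix gives `y₁² ≤ y₂ ≤ 1` (two principal 2×2 minors).
The first bound makes `y₂ ∓ 2y₁ + 1 + a ≥ (y₁ ∓ 1)² + a > 0`; the product of the two terms is
`(y₂ + 1 + a)² − 4y₁² ≤ (a + 2)²` by the second. Equality holds at `(0, 1)`, where the moment
matrix is the Gram matrix of the columns `e₁, e₂, e₁, e₂`.
-/

noncomputable section

/-- The moment matrix of Example 4.6. -/
def momMat46 (y1 y2 : ℝ) : Matrix (Fin 4) (Fin 4) ℝ :=
  !![(1 : ℝ), y1, y2, y1;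
     y1, y2, y1, y2;
     y2, y1, y2, y1;
     y1, y2, y1, y2]

open Matrix

theorem momMat46_zero_one_eq_conjTranspose_mul :
    momMat46 0 1 = (!![1, 0, 1, 0; 0, 1, 0, 1] : Matrix (Fin 2) (Fin 4) ℝ)ᴴ *
      (!![1, 0, 1, 0; 0, 1, 0, 1] : Matrix (Fin 2) (Fin 4) ℝ) := by
  ext i j
  fin_cases i <;> fin_cases j <;> simp [momMat46, mul_apply, Fin.sum_univ_two]

theorem posSemidef_momMat46_zero_one : (momMat46 0 1).PosSemidef := by
  rw [momMat46_zero_one_eq_conjTranspose_mul]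
  exact posSemidef_conjTranspose_mul_self _

theorem sq_le_and_le_one_of_posSemidef_momMat46 {y1 y2 : ℝ}
    (h : (momMat46 y1 y2).PosSemidef) : y1 ^ 2 ≤ y2 ∧ y2 ≤ 1 := by
  -- the quadratic form takes the values `y₂ - y₁²` and `1 - y₂` at these vectors
  have h01 := h.dotProduct_mulVec_nonneg ![y1, -1, 0, 0]
  have h02 := h.dotProduct_mulVec_nonneg ![1, 0, -1, 0]
  simp [momMat46, dotProduct, mulVec, Fin.sum_univ_four] at h01 h02
  constructor <;> nlinarith

theorem relaxation_terms_pos {y1 y2 a : ℝ} (h : y1 ^ 2 ≤ y2) (ha : 0 < a) :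
    0 < y2 - 2 * y1 + 1 + a ∧ 0 < y2 + 2 * y1 + 1 + a :=
  ⟨by nlinarith [sq_nonneg (y1 - 1)], by nlinarith [sq_nonneg (y1 + 1)]⟩

theorem relaxation_terms_mul_le {y1 y2 a : ℝ} (hsq : y1 ^ 2 ≤ y2) (hle : y2 ≤ 1)
    (ha : 0 ≤ a) : (y2 - 2 * y1 + 1 + a) * (y2 + 2 * y1 + 1 + a) ≤ (a + 2) ^ 2 := by
  nlinarith [sq_nonneg y1]

theorem Real.log_add_log_le_two_mul_log {x y c : ℝ} (hx : 0 < x) (hy : 0 < y)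
    (h : x * y ≤ c ^ 2) : Real.log x + Real.log y ≤ 2 * Real.log c := by
  rw [← Real.log_mul hx.ne' hy.ne', show 2 * Real.log c = Real.log (c ^ 2) by simp [Real.log_pow]]
  exact Real.log_le_log (mul_pos hx hy) h

/-- **Example 4.6, relaxation optimal value.**  For `a > 0`,
over all `(y₁, y₂)` making the matrix PSD, the quantities `y₂ − 2y₁ + 1 + a`
and `y₂ + 2y₁ + 1 + a` are positive, and the maximum of
`log(y₂ − 2y₁ + 1 + a) + log(y₂ + 2y₁ + 1 + a)` is `2·log(a + 2)`, attained
at `(y₁, y₂) = (0, 1)`. -/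
theorem relaxation_value_example (a : ℝ) (ha : 0 < a) :
    (∀ y1 y2 : ℝ, (momMat46 y1 y2).PosSemidef →
      0 < y2 - 2 * y1 + 1 + a ∧ 0 < y2 + 2 * y1 + 1 + a) ∧
    IsGreatest
      {t : ℝ | ∃ y1 y2 : ℝ, (momMat46 y1 y2).PosSemidef ∧
        t = Real.log (y2 - 2 * y1 + 1 + a) + Real.log (y2 + 2 * y1 + 1 + a)}
      (2 * Real.log (a + 2)) ∧
    (momMat46 0 1).PosSemidef ∧
    Real.log ((1 : ℝ) - 2 * 0 + 1 + a) + Real.log ((1 : ℝ) + 2 * 0 + 1 + a) =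
      2 * Real.log (a + 2) := by
  have hpos : ∀ y1 y2 : ℝ, (momMat46 y1 y2).PosSemidef →
      0 < y2 - 2 * y1 + 1 + a ∧ 0 < y2 + 2 * y1 + 1 + a := fun _ _ h =>
    relaxation_terms_pos (sq_le_and_le_one_of_posSemidef_momMat46 h).1 ha
  have hvalue : Real.log ((1 : ℝ) - 2 * 0 + 1 + a) + Real.log ((1 : ℝ) + 2 * 0 + 1 + a) =
      2 * Real.log (a + 2) := by
    rw [show (1 : ℝ) - 2 * 0 + 1 + a = a + 2 by ring, show (1 : ℝ) + 2 * 0 + 1 + a = a + 2 by ring,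
      two_mul]
  refine ⟨hpos, ⟨⟨0, 1, posSemidef_momMat46_zero_one, hvalue.symm⟩, ?_⟩,
    posSemidef_momMat46_zero_one, hvalue⟩
  rintro t ⟨y1, y2, h, rfl⟩
  obtain ⟨hsq, hle⟩ := sq_le_and_le_one_of_posSemidef_momMat46 h
  obtain ⟨hminus, hplus⟩ := hpos y1 y2 h
  exact Real.log_add_log_le_two_mul_log hminus hplus (relaxation_terms_mul_le hsq hle ha.le)

end
end
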